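/- Let H = ⊕_{n∈ℕ} H^n be an ℕ-graded connected bialgebra over k and Z an infinitesimal character of H. Then the exponential e^Z, defined on each h∈H by the sum e^Z(h) = ε(h) + Σ_{m≥1} (1/m!)⟨Z^{*m}, h⟩ (which has only finitely many nonzero terms since ⟨Z^{*m},h⟩ = 0 for m greater than the top degree of h), is a character of H: e^Z(hk) = e^Z(h)·e^Z(k) for all h,k∈H and e^Z(1)=1. -/

import Mathlib

open TensorProduct

/-- The convolution product on the algebraic dual `H →ₗ[R] R` of a coalgebra `H`:
`⟨ξ * η, h⟩ = ⟨ξ ⊗ η, Δ h⟩`. -/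
noncomputable def conv {R H : Type*} [CommSemiring R] [AddCommMonoid H] [Module R H]
    [Coalgebra R H] (ξ η : H →ₗ[R] R) : H →ₗ[R] R :=
  LinearMap.mul' R R ∘ₗ TensorProduct.map ξ η ∘ₗ Coalgebra.comul

/-- The `m`-fold convolution power `Z^{*m}` of a functional `Z` (with `Z^{*0} = ε`). -/
noncomputable def convPow {R H : Type*} [CommSemiring R] [AddCommMonoid H] [Module R H]
    [Coalgebra R H] (Z : H →ₗ[R] R) : ℕ → (H →ₗ[R] R)
  | 0 => Coalgebra.counit
  | m + 1 => conv Z (convPow Z m)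

/-- An infinitesimal character of `H`: an `R`-linear map `Z : H → R` with
`Z (hk) = Z h * ε k + ε h * Z k`. -/
def IsInfinitesimalCharacter {R H : Type*} [CommSemiring R] [Semiring H] [Module R H]
    [Coalgebra R H] (Z : H →ₗ[R] R) : Prop :=
  ∀ a b : H, Z (a * b) = Z a * Coalgebra.counit b + Coalgebra.counit a * Z b

/-- The submodule `A ⊗ B` of `H ⊗ H` spanned by the pure tensors `a ⊗ b` with `a ∈ A`,
`b ∈ B`. -/
noncomputable def tensorSub {R H : Type*} [CommSemiring R] [AddCommMonoid H] [Module R H]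
    (A B : Submodule R H) : Submodule R (H ⊗[R] H) :=
  Submodule.span R {z : H ⊗[R] H | ∃ a ∈ A, ∃ b ∈ B, z = a ⊗ₜ[R] b}

/-!
Put `D m = (1/m!) Z^{*m}` and let `μ : H ⊗ H → H` be the multiplication. Because `Z` is an
infinitesimal character, `Z ∘ μ = Z ⊗ ε + ε ⊗ Z` is a sum of two commuting elements of the
convolution algebra of `H ⊗ H`, and `ξ ↦ ξ ∘ μ` is multiplicative for convolution since `μ` is a
coalgebra map; the binomial theorem then gives the Leibniz rule
`D m (a b) = ∑_{i+j=m} D i a * D j b`. Connectedness and the grading of `Δ` make `Z^{*m}` vanish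
in degrees below `m`, so `e^Z = ∑ₘ D m` is a pointwise finite sum, and the Leibniz rule says
precisely that this sum is multiplicative.
-/

open Finset WithConv

theorem Finset.sum_range_sum_antidiagonal_eq_mul {A : Type*} [Semiring A] {u v : ℕ → A} {p q : ℕ}
    (hu : ∀ i, p < i → u i = 0) (hv : ∀ j, q < j → v j = 0) :
    ∑ m ∈ range (p + q + 1), ∑ x ∈ antidiagonal m, u x.1 * v x.2 =
      (∑ i ∈ range (p + 1), u i) * ∑ j ∈ range (q + 1), v j := by
  rw [sum_mul_sum, ← sum_product', sum_sigma']
  refine sum_bij_ne_zero (fun x _ _ ↦ x.2) ?_ ?_ ?_ (fun _ _ _ ↦ rfl)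
  · rintro ⟨m, i, j⟩ - hne
    have hi : i ≤ p := not_lt.mp fun h ↦ hne (by simp [hu i h])
    have hj : j ≤ q := not_lt.mp fun h ↦ hne (by simp [hv j h])
    simp only [mem_product, mem_range]
    omega
  · rintro ⟨m, x⟩ hx - ⟨m', x'⟩ hx' - rfl
    simp only [mem_sigma, HasAntidiagonal.mem_antidiagonal] at hx hx'
    rw [← hx.2, ← hx'.2]
  · rintro ⟨i, j⟩ hij hne
    simp only [mem_product, mem_range] at hij
    refine ⟨⟨i + j, i, j⟩, ?_, hne, rfl⟩
    simp only [mem_sigma, mem_range, HasAntidiagonal.mem_antidiagonal, and_true]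
    omega

section Finsum

variable {R M N : Type*} [Semiring R] [AddCommMonoid M] [Module R M] [AddCommMonoid N] [Module R N]

lemma Function.support_subset_range_of_forall_lt {u : ℕ → N} {n : ℕ} (hu : ∀ m, n < m → u m = 0) :
    Function.support u ⊆ range (n + 1) := fun m hm ↦ by
  simpa [Nat.lt_succ_iff] using not_lt.mp (mt (hu m) hm)

lemma Function.hasFiniteSupport_of_forall_lt {u : ℕ → N} {n : ℕ} (hu : ∀ m, n < m → u m = 0) :
    Function.HasFiniteSupport u :=
  (range (n + 1)).finite_toSet.subset (Function.support_subset_range_of_forall_lt hu)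

noncomputable def LinearMap.finsum (D : ℕ → M →ₗ[R] N) (hD : ∀ x, ∃ n, ∀ m, n < m → D m x = 0) :
    M →ₗ[R] N where
  toFun x := ∑ᶠ m, D m x
  map_add' x y := by
    obtain ⟨n, hn⟩ := hD x
    obtain ⟨n', hn'⟩ := hD y
    simpa only [map_add] using finsum_add_distrib (Function.hasFiniteSupport_of_forall_lt hn)
      (Function.hasFiniteSupport_of_forall_lt hn')
  map_smul' c x := by
    obtain ⟨n, hn⟩ := hD x
    simpa only [map_smul, RingHom.id_apply] using
      (smul_finsum' c (Function.hasFiniteSupport_of_forall_lt hn)).symm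

lemma LinearMap.finsum_apply_eq_sum_range {D : ℕ → M →ₗ[R] N}
    {hD : ∀ x, ∃ n, ∀ m, n < m → D m x = 0} {x : M} {n : ℕ} (hx : ∀ m, n < m → D m x = 0) :
    LinearMap.finsum D hD x = ∑ m ∈ Finset.range (n + 1), D m x :=
  finsum_eq_sum_of_support_subset _ (Function.support_subset_range_of_forall_lt hx)

theorem LinearMap.finsum_apply_mul {H A : Type*} [Semiring H] [Module R H] [Semiring A] [Module R A]
    {D : ℕ → H →ₗ[R] A} (hD : ∀ x, ∃ n, ∀ m, n < m → D m x = 0)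
    (hD_mul : ∀ m a b, D m (a * b) = ∑ x ∈ antidiagonal m, D x.1 a * D x.2 b) (a b : H) :
    LinearMap.finsum D hD (a * b) = LinearMap.finsum D hD a * LinearMap.finsum D hD b := by
  obtain ⟨p, hp⟩ := hD a
  obtain ⟨q, hq⟩ := hD b
  have hpq : ∀ m, p + q < m → D m (a * b) = 0 := fun m hm ↦ by
    refine (hD_mul m a b).trans (sum_eq_zero fun x hx ↦ ?_)
    rw [HasAntidiagonal.mem_antidiagonal] at hx
    rcases lt_or_ge p x.1 with h | h
    · rw [hp _ h, zero_mul]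
    · rw [hq _ (by omega), mul_zero]
  rw [finsum_apply_eq_sum_range hpq, finsum_apply_eq_sum_range hp, finsum_apply_eq_sum_range hq,
    ← sum_range_sum_antidiagonal_eq_mul hp hq]
  exact sum_congr rfl fun m _ ↦ hD_mul m a b

end Finsum

section TensorConv

variable {R C D : Type*} [CommSemiring R] [AddCommMonoid C] [Module R C] [Coalgebra R C]
  [AddCommMonoid D] [Module R D] [Coalgebra R D]

noncomputable def tensorConv (ξ : WithConv (C →ₗ[R] R)) (η : WithConv (D →ₗ[R] R)) :
    WithConv (C ⊗[R] D →ₗ[R] R) :=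
  toConv (LinearMap.mul' R R ∘ₗ TensorProduct.map ξ.ofConv η.ofConv)

lemma tensorConv_mul_tensorConv (ξ ξ' : WithConv (C →ₗ[R] R)) (η η' : WithConv (D →ₗ[R] R)) :
    tensorConv ξ η * tensorConv ξ' η' = tensorConv (ξ * ξ') (η * η') := by
  apply ofConv_injective
  simp only [tensorConv, ← Algebra.TensorProduct.lmul'_toLinearMap, ofConv_toConv]
  have := congrArg (fun F ↦ (Algebra.TensorProduct.lmul' R).toLinearMap ∘ₗ ofConv F)
    (TensorProduct.map_convMul_map (f := ξ) (g := η) (h := ξ') (k := η'))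
  simpa only [LinearMap.algHom_comp_convMul_distrib] using this

lemma tensorConv_one_one :
    tensorConv (1 : WithConv (C →ₗ[R] R)) (1 : WithConv (D →ₗ[R] R)) = 1 := by
  ext c d
  simp [tensorConv, mul_comm]

lemma tensorConv_pow (ξ : WithConv (C →ₗ[R] R)) (η : WithConv (D →ₗ[R] R)) (n : ℕ) :
    tensorConv ξ η ^ n = tensorConv (ξ ^ n) (η ^ n) := by
  induction n with
  | zero => exact tensorConv_one_one.symm
  | succ n ih => rw [pow_succ, ih, tensorConv_mul_tensorConv, ← pow_succ, ← pow_succ]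

end TensorConv

noncomputable def CoalgHom.precompConv {R A B C : Type*} [CommSemiring R] [Semiring A] [Algebra R A]
    [AddCommMonoid B] [Module R B] [Coalgebra R B] [AddCommMonoid C] [Module R C] [Coalgebra R C]
    (h : B →ₗc[R] C) : WithConv (C →ₗ[R] A) →* WithConv (B →ₗ[R] A) where
  toFun ξ := toConv (ξ.ofConv ∘ₗ h.toLinearMap)
  map_one' := by ext; simp
  map_mul' ξ η := ofConv_injective (LinearMap.convMul_comp_coalgHom_distrib ξ η h)

lemma toConv_convPow {R H : Type*} [CommSemiring R] [AddCommMonoid H] [Module R H] [Coalgebra R H]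
    (Z : H →ₗ[R] R) (m : ℕ) : toConv (convPow Z m) = toConv Z ^ m := by
  induction m with
  | zero => ext; simp [convPow]
  | succ m ih => rw [pow_succ', ← ih]; rfl

theorem convPow_apply_mul {R H : Type*} [CommSemiring R] [Semiring H] [Bialgebra R H]
    {Z : H →ₗ[R] R} (hZ : IsInfinitesimalCharacter Z) (m : ℕ) (a b : H) :
    convPow Z m (a * b) =
      ∑ x ∈ antidiagonal m, m.choose x.1 • (convPow Z x.1 a * convPow Z x.2 b) := by
  set μ := (Bialgebra.mulCoalgHom R H).precompConv (A := R)
  have hμZ : μ (toConv Z) = tensorConv (toConv Z) 1 + tensorConv 1 (toConv Z) := by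
    ext a b
    simp [μ, CoalgHom.precompConv, tensorConv, hZ a b]
  have hcomm : Commute (tensorConv (toConv Z) 1) (tensorConv 1 (toConv Z)) := by
    simp only [Commute, SemiconjBy, tensorConv_mul_tensorConv, mul_one, one_mul]
  have := congr($(map_pow μ (toConv Z) m) (a ⊗ₜ b))
  rw [hμZ, hcomm.add_pow'] at this
  simp only [tensorConv_pow, tensorConv_mul_tensorConv, one_pow, mul_one, one_mul, ofConv_sum,
    ofConv_smul, LinearMap.coe_sum, Finset.sum_apply, LinearMap.smul_apply,
    ← toConv_convPow] at this
  exact this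

lemma IsInfinitesimalCharacter.map_one {R H : Type*} [CommRing R] [Semiring H] [Bialgebra R H]
    {Z : H →ₗ[R] R} (hZ : IsInfinitesimalCharacter Z) : Z 1 = 0 :=
  left_eq_add.mp (by simpa only [mul_one, one_mul, Bialgebra.counit_one] using hZ 1 1)

section DivConvPow

variable {R H : Type*} [Field R] [Semiring H] [Bialgebra R H]

noncomputable def divConvPow (Z : H →ₗ[R] R) (m : ℕ) : H →ₗ[R] R :=
  (m.factorial : R)⁻¹ • convPow Z m

theorem divConvPow_apply_mul [CharZero R] {Z : H →ₗ[R] R} (hZ : IsInfinitesimalCharacter Z)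
    (m : ℕ) (a b : H) :
    divConvPow Z m (a * b) = ∑ x ∈ antidiagonal m, divConvPow Z x.1 a * divConvPow Z x.2 b := by
  simp only [divConvPow, LinearMap.smul_apply, smul_eq_mul, convPow_apply_mul hZ, mul_sum]
  refine sum_congr rfl fun x hx ↦ ?_
  rw [HasAntidiagonal.mem_antidiagonal] at hx
  subst hx
  have : ((x.1 + x.2).factorial : R) ≠ 0 := Nat.cast_ne_zero.mpr (Nat.factorial_ne_zero _)
  rw [nsmul_eq_mul, Nat.cast_add_choose]
  field_simp

end DivConvPow

section Graded

variable {R H : Type*} [CommSemiring R] [AddCommMonoid H] [Module R H] [Coalgebra R H]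
  {𝒜 : ℕ → Submodule R H}

theorem convPow_apply_eq_zero_of_mem_of_lt
    (hcomul : ∀ n : ℕ, ∀ x ∈ 𝒜 n,
      Coalgebra.comul (R := R) x ∈
        ⨆ (p : ℕ × ℕ) (_ : p.1 + p.2 = n), tensorSub (𝒜 p.1) (𝒜 p.2))
    {Z : H →ₗ[R] R} (hZ₀ : ∀ a ∈ 𝒜 0, Z a = 0) {m n : ℕ} (hnm : n < m) {h : H} (hh : h ∈ 𝒜 n) :
    convPow Z m h = 0 := by
  induction m generalizing n h with
  | zero => omega
  | succ m ih =>
    suffices (⨆ (p : ℕ × ℕ) (_ : p.1 + p.2 = n), tensorSub (𝒜 p.1) (𝒜 p.2)) ≤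
        LinearMap.ker (LinearMap.mul' R R ∘ₗ TensorProduct.map Z (convPow Z m)) from
      this (hcomul n h hh)
    refine iSup₂_le fun ⟨i, j⟩ hij ↦ Submodule.span_le.mpr ?_
    rintro _ ⟨a, ha, b, hb, rfl⟩
    rcases i with _ | i
    · simp [hZ₀ a ha]
    · simp [ih (n := j) (by grind) hb]

theorem convPow_apply_eq_zero_of_mem_iSup_le
    (hcomul : ∀ n : ℕ, ∀ x ∈ 𝒜 n,
      Coalgebra.comul (R := R) x ∈
        ⨆ (p : ℕ × ℕ) (_ : p.1 + p.2 = n), tensorSub (𝒜 p.1) (𝒜 p.2))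
    {Z : H →ₗ[R] R} (hZ₀ : ∀ a ∈ 𝒜 0, Z a = 0) {m n : ℕ} (hnm : n < m) {h : H}
    (hh : h ∈ ⨆ (p : ℕ) (_ : p ≤ n), 𝒜 p) :
    convPow Z m h = 0 :=
  (iSup₂_le fun _ hp _ hx ↦ convPow_apply_eq_zero_of_mem_of_lt hcomul hZ₀ (by omega) hx :
    (⨆ (p : ℕ) (_ : p ≤ n), 𝒜 p) ≤ LinearMap.ker (convPow Z m)) hh

end Graded

theorem Submodule.exists_mem_iSup_le_of_iSup_eq_top {R M : Type*} [Semiring R] [AddCommMonoid M]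
    [Module R M] {𝒜 : ℕ → Submodule R M} (h𝒜 : iSup 𝒜 = ⊤) (x : M) :
    ∃ N, x ∈ ⨆ (p : ℕ) (_ : p ≤ N), 𝒜 p := by
  have mono {N N' : ℕ} (h : N ≤ N') :
      (⨆ (p : ℕ) (_ : p ≤ N), 𝒜 p) ≤ ⨆ (p : ℕ) (_ : p ≤ N'), 𝒜 p :=
    biSup_mono fun _ hp ↦ hp.trans h
  refine Submodule.iSup_induction 𝒜 (motive := fun x ↦ ∃ N, x ∈ ⨆ (p : ℕ) (_ : p ≤ N), 𝒜 p)
    (h𝒜 ▸ Submodule.mem_top) (fun p x hx ↦ ⟨p, mem_iSup_of_mem p (mem_iSup_of_mem le_rfl hx)⟩)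
    ⟨0, zero_mem _⟩ ?_
  rintro x y ⟨N, hx⟩ ⟨N', hy⟩
  exact ⟨max N N', add_mem (mono (le_max_left N N') hx) (mono (le_max_right N N') hy)⟩

theorem exp_of_infinitesimal_character_is_character_general
    {R H : Type*} [Field R] [CharZero R] [Ring H] [Bialgebra R H]
    (𝒜 : ℕ → Submodule R H)
    (hdirect : DirectSum.IsInternal 𝒜)
    (hcomul : ∀ n : ℕ, ∀ x ∈ 𝒜 n,
      Coalgebra.comul (R := R) x ∈
        ⨆ (p : ℕ × ℕ) (_ : p.1 + p.2 = n), tensorSub (𝒜 p.1) (𝒜 p.2))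
    (hconn : 𝒜 0 = Submodule.span R {(1 : H)})
    (Z : H →ₗ[R] R) (hZ : IsInfinitesimalCharacter Z) :
    ∃ f : H →ₗ[R] R,
      (∀ (N : ℕ) (h : H), h ∈ (⨆ (p : ℕ) (_ : p ≤ N), 𝒜 p) →
        f h = ∑ m ∈ Finset.range (N + 1), ((Nat.factorial m : R))⁻¹ * convPow Z m h) ∧
      f ≠ 0 ∧ (∀ a b : H, f (a * b) = f a * f b) ∧ f 1 = 1 := by
  have hZ₀ : ∀ a ∈ 𝒜 0, Z a = 0 := by
    simp [hconn, Submodule.mem_span_singleton, hZ.map_one]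
  have hvanish {N : ℕ} {h : H} (hh : h ∈ ⨆ (p : ℕ) (_ : p ≤ N), 𝒜 p) (m : ℕ) (hm : N < m) :
      divConvPow Z m h = 0 := by
    simp [divConvPow, convPow_apply_eq_zero_of_mem_iSup_le hcomul hZ₀ hm hh]
  have hfin (h : H) : ∃ N, ∀ m, N < m → divConvPow Z m h = 0 :=
    (Submodule.exists_mem_iSup_le_of_iSup_eq_top hdirect.submodule_iSup_eq_top h).imp
      fun _ ↦ hvanish
  set f := LinearMap.finsum (divConvPow Z) hfin
  have hf (N : ℕ) (h : H) (hh : h ∈ ⨆ (p : ℕ) (_ : p ≤ N), 𝒜 p) :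
      f h = ∑ m ∈ range (N + 1), ((Nat.factorial m : R))⁻¹ * convPow Z m h :=
    LinearMap.finsum_apply_eq_sum_range (hvanish hh)
  have hf_one : f 1 = 1 := by
    have h1 : (1 : H) ∈ ⨆ (p : ℕ) (_ : p ≤ 0), 𝒜 p := Submodule.mem_iSup_of_mem 0 <|
      Submodule.mem_iSup_of_mem le_rfl <| hconn ▸ Submodule.mem_span_singleton_self 1
    simp [hf 0 1 h1, convPow]
  exact ⟨f, hf, fun h ↦ by simp [h] at hf_one,
    LinearMap.finsum_apply_mul hfin (divConvPow_apply_mul hZ), hf_one⟩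

/-- In an ℕ-graded connected bialgebra `H` over a field of characteristic zero, the
exponential `e^Z` of an infinitesimal character `Z`, given on every element `h` of degree at
most `N` by the (finite) sum `e^Z(h) = Σ_{m=0}^{N} (1/m!) ⟨Z^{*m}, h⟩` (whose `m = 0` term is
`ε(h)`, higher terms vanishing), is a well-defined `k`-linear map and is a character of `H`:
it is nonzero and multiplicative (in particular `e^Z(1) = 1`). -/
theorem exp_of_infinitesimal_character_is_character
    {R H : Type*} [Field R] [CharZero R] [Ring H] [Bialgebra R H]
    (𝒜 : ℕ → Submodule R H)
    (hdirect : DirectSum.IsInternal 𝒜)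
    (hmul : ∀ (p q : ℕ), ∀ a ∈ 𝒜 p, ∀ b ∈ 𝒜 q, a * b ∈ 𝒜 (p + q))
    (hcomul : ∀ n : ℕ, ∀ x ∈ 𝒜 n,
      Coalgebra.comul (R := R) x ∈
        ⨆ (p : ℕ × ℕ) (_ : p.1 + p.2 = n), tensorSub (𝒜 p.1) (𝒜 p.2))
    (hconn : 𝒜 0 = Submodule.span R {(1 : H)})
    (Z : H →ₗ[R] R) (hZ : IsInfinitesimalCharacter Z) :
    ∃ f : H →ₗ[R] R,
      (∀ (N : ℕ) (h : H), h ∈ (⨆ (p : ℕ) (_ : p ≤ N), 𝒜 p) →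
        f h = ∑ m ∈ Finset.range (N + 1), ((Nat.factorial m : R))⁻¹ * convPow Z m h) ∧
      f ≠ 0 ∧ (∀ a b : H, f (a * b) = f a * f b) ∧ f 1 = 1 :=
  exp_of_infinitesimal_character_is_character_general 𝒜 hdirect hcomul hconn Z hZ
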